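/- arXiv:math/0501358 — 4 statements merged into one kernel-verified Lean document; each statement's English description precedes it below -/
import Mathlib

section
/- Let h be a Riemannian metric on a manifold M and W a vector field with h(W,W) < 1. Define λ = 1 - h(W,W) and the Randers norm F(y) = (sqrt(λ·h(y,y) + h(W,y)²) - h(W,y))/λ. Then for any tangent vector y, F(y) = 1 if and only if h(y - W, y - W) = 1. -/
/-!
Write `a = h(y,y)`, `b = h(W,y)`, `c = h(W,W)` and `λ = 1 - c > 0`. Then `F(y) = 1` means
`√(λa + b²) = λ + b`, and squaring turns this into `λa = λ² + 2λb`, i.e. `a - 2b + c = 1`, which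
is the expansion of `h(y - W, y - W) = 1`. Squaring is reversible because `λ + b ≥ λ/2 > 0`
as soon as `a = λ + 2b ≥ 0`.
-/

theorem sqrt_mul_add_sq_sub_div_eq_one_iff {a b c : ℝ} (hc : c < 1) (ha : 0 ≤ a) :
    (√((1 - c) * a + b ^ 2) - b) / (1 - c) = 1 ↔ a - 2 * b + c = 1 := by
  have hl : 0 < 1 - c := sub_pos.2 hc
  have hS : 0 ≤ (1 - c) * a + b ^ 2 := by positivity
  rw [div_eq_one_iff_eq hl.ne', sub_eq_iff_eq_add]
  constructor
  · intro hsqrt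
    have hsq : (1 - c) * a + b ^ 2 = (1 - c + b) ^ 2 := by rw [← hsqrt, Real.sq_sqrt hS]
    have : (1 - c) * (a - 2 * b + c - 1) = 0 := by linear_combination hsq
    linarith [(mul_eq_zero.1 this).resolve_left hl.ne']
  · intro hsum
    rw [Real.sqrt_eq_iff_eq_sq hS (by linarith)]
    linear_combination (1 - c) * hsum

theorem LinearMap.BilinForm.apply_sub_sub_of_comm {R M : Type*} [CommRing R] [AddCommGroup M]
    [Module R M] (B : LinearMap.BilinForm R M) {x y : M} (hxy : B x y = B y x) :
    B (x - y) (x - y) = B x x - 2 * B y x + B y y := by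
  simp only [map_sub, LinearMap.sub_apply, hxy]
  ring

/-- Pointwise Zermelo navigation lemma: the Randers norm `F` satisfies `F(y) = 1`
iff `h(y - W, y - W) = 1`. -/
theorem stmt0 {V : Type*} [AddCommGroup V] [Module ℝ V]
    (h : LinearMap.BilinForm ℝ V)
    (hsymm : ∀ u v : V, h u v = h v u)
    (hpos : ∀ v : V, v ≠ 0 → 0 < h v v)
    (W : V) (hW : h W W < 1) (y : V) :
    (Real.sqrt ((1 - h W W) * h y y + (h W y) ^ 2) - h W y) / (1 - h W W) = 1 ↔
      h (y - W) (y - W) = 1 := by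
  have hyy : 0 ≤ h y y := by
    rcases eq_or_ne y 0 with rfl | hy
    · simp
    · exact (hpos y hy).le
  rw [h.apply_sub_sub_of_comm (hsymm y W)]
  exact sqrt_mul_add_sq_sub_div_eq_one_iff hW hyy
end

section
/- Let h be a positive definite inner product on a finite-dimensional real vector space V and W ∈ V with h(W,W) < 1. Set λ = 1 - h(W,W), define the bilinear form a(u,v) = (λ·h(u,v) + h(W,u)·h(W,v))/λ², and the linear form b(v) = -h(W,v)/λ. Then a is positive definite and a(b♯,b♯) = h(W,W) < 1, where b♯ is the vector representing b with respect to a. -/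
namespace Navigation

variable {V : Type*} [AddCommGroup V] [Module ℝ V] (h : LinearMap.BilinForm ℝ V) (W : V)

noncomputable def randersMetric (u v : V) : ℝ :=
  ((1 - h W W) * h u v + h W u * h W v) / (1 - h W W) ^ 2

noncomputable def randersOneForm (v : V) : ℝ :=
  -(h W v) / (1 - h W W)

variable {h W}

theorem randersMetric_self_pos (hpos : ∀ v : V, v ≠ 0 → 0 < h v v) (hW : h W W < 1)
    {v : V} (hv : v ≠ 0) : 0 < randersMetric h W v v := by
  have hWW : 0 ≤ h W W := by
    rcases eq_or_ne W 0 with rfl | hW0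
    · simp
    · exact (hpos W hW0).le
  have hl : 0 < 1 - h W W := by linarith
  unfold randersMetric
  exact div_pos (add_pos_of_pos_of_nonneg (mul_pos hl (hpos v hv)) (mul_self_nonneg _))
    (by positivity)

theorem randersMetric_apply_right_self (hsymm : ∀ u v : V, h u v = h v u) (u : V) :
    randersMetric h W u W = h W u / (1 - h W W) ^ 2 := by
  unfold randersMetric
  rw [hsymm u W]
  ring

/-- Testing the defining property of `b♯` against `W` gives `h(W, b♯) = -(1 - h(W, W)) h(W, W)`,
and then `a(b♯, b♯) = b(b♯) = h(W, W)`. -/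
theorem randersMetric_sharp_self (hsymm : ∀ u v : V, h u v = h v u) (hW : h W W ≠ 1)
    {bs : V} (hbs : ∀ v : V, randersMetric h W bs v = randersOneForm h W v) :
    randersMetric h W bs bs = h W W := by
  have hl : 1 - h W W ≠ 0 := sub_ne_zero.mpr hW.symm
  have hWbs : h W bs = -(1 - h W W) * h W W := by
    have := hbs W
    rw [randersMetric_apply_right_self hsymm, randersOneForm] at this
    field_simp at this
    linear_combination this
  rw [hbs bs, randersOneForm, hWbs]
  field_simp

end Navigation

open Navigation in
theorem stmt1_general {V : Type*} [AddCommGroup V] [Module ℝ V]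
    (h : LinearMap.BilinForm ℝ V)
    (hsymm : ∀ u v : V, h u v = h v u)
    (hpos : ∀ v : V, v ≠ 0 → 0 < h v v)
    (W : V) (hW : h W W < 1)
    (a : V → V → ℝ)
    (ha : ∀ u v : V, a u v =
      ((1 - h W W) * h u v + h W u * h W v) / (1 - h W W) ^ 2)
    (b : V → ℝ)
    (hb : ∀ v : V, b v = -(h W v) / (1 - h W W)) :
    (∀ v : V, v ≠ 0 → 0 < a v v) ∧
      ∀ bs : V, (∀ v : V, a bs v = b v) → a bs bs = h W W ∧ a bs bs < 1 := by
  obtain rfl : a = randersMetric h W := funext fun u => funext (ha u)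
  obtain rfl : b = randersOneForm h W := funext hb
  refine ⟨fun v hv => randersMetric_self_pos hpos hW hv, fun bs hbs => ?_⟩
  have hsharp := randersMetric_sharp_self hsymm hW.ne hbs
  exact ⟨hsharp, hsharp ▸ hW⟩

/-- Translation from navigation data `(h, W)` to the Randers data `(a, b)`:
`a` is positive definite and `a(b♯, b♯) = h(W, W) < 1`. -/
theorem stmt1 {V : Type*} [AddCommGroup V] [Module ℝ V] [FiniteDimensional ℝ V]
    (h : LinearMap.BilinForm ℝ V)
    (hsymm : ∀ u v : V, h u v = h v u)
    (hpos : ∀ v : V, v ≠ 0 → 0 < h v v)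
    (W : V) (hW : h W W < 1)
    (a : V → V → ℝ)
    (ha : ∀ u v : V, a u v =
      ((1 - h W W) * h u v + h W u * h W v) / (1 - h W W) ^ 2)
    (b : V → ℝ)
    (hb : ∀ v : V, b v = -(h W v) / (1 - h W W)) :
    (∀ v : V, v ≠ 0 → 0 < a v v) ∧
      ∀ bs : V, (∀ v : V, a bs v = b v) → a bs bs = h W W ∧ a bs bs < 1 :=
  stmt1_general h hsymm hpos W hW a ha b hb
end

section
/- With notation as above (sphere S², rotation field with parameter 0 < a < 1, a irrational), the curve 𝒫(t) = φ(t, ρ(t)) with ρ(t) = cos(t)·q + sin(t)·u (q, u orthonormal in ℝ³) is periodic (there exists T > 0 with 𝒫(t+T) = 𝒫(t) for all t) if and only if ρ parameterizes the equator {p² = 0}, i.e. q² = 0 and u² = 0. -/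
set_option maxHeartbeats 1600000 in
/-- For irrational `a`, the curve `P(t) = φ(t, ρ(t))` (Katok geodesic on `S²`)
is periodic iff the great circle `ρ` parameterizes the equator `{p² = 0}`. -/
theorem stmt9 (a : ℝ) (ha0 : 0 < a) (ha1 : a < 1) (hairr : Irrational a)
    (q u : Fin 3 → ℝ)
    (hq : q 0 ^ 2 + q 1 ^ 2 + q 2 ^ 2 = 1)
    (hu : u 0 ^ 2 + u 1 ^ 2 + u 2 ^ 2 = 1)
    (hqu : q 0 * u 0 + q 1 * u 1 + q 2 * u 2 = 0)
    (ρ : ℝ → Fin 3 → ℝ)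
    (hρ : ∀ t, ρ t = fun i => Real.cos t * q i + Real.sin t * u i)
    (P : ℝ → Fin 3 → ℝ)
    (hP : ∀ t, P t = ![ρ t 0 * Real.cos (a * t) + ρ t 1 * Real.sin (a * t),
                        -(ρ t 0) * Real.sin (a * t) + ρ t 1 * Real.cos (a * t),
                        ρ t 2]) :
    (∃ T > 0, ∀ t, P (t + T) = P t) ↔ (q 2 = 0 ∧ u 2 = 0) := by
  constructor
  · rintro ⟨T, hT, hper⟩
    by_contra hne
    -- component 2 periodicity
    have h2 : ∀ t, Real.cos (t + T) * q 2 + Real.sin (t + T) * u 2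
        = Real.cos t * q 2 + Real.sin t * u 2 := by
      intro t
      have := congrFun (hper t) 2
      rw [hP, hP, hρ, hρ] at this
      simpa using this
    set A := Real.cos T - 1 with hA
    set B := Real.sin T with hB
    have e1 : A * q 2 + B * u 2 = 0 := by
      have := h2 0
      simp at this
      rw [hA, hB]; linarith
    have e2 : -B * q 2 + A * u 2 = 0 := by
      have := h2 (Real.pi / 2)
      rw [Real.cos_add, Real.sin_add, Real.cos_pi_div_two, Real.sin_pi_div_two] at this
      rw [hA, hB]; nlinarith [this]
    have hq2 : (A ^ 2 + B ^ 2) * q 2 = 0 := by linear_combination A * e1 - B * e2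
    have hu2 : (A ^ 2 + B ^ 2) * u 2 = 0 := by linear_combination B * e1 + A * e2
    have hAB : A ^ 2 + B ^ 2 = 0 := by
      by_contra hAB
      exact hne ⟨(mul_eq_zero.mp hq2).resolve_left hAB,
        (mul_eq_zero.mp hu2).resolve_left hAB⟩
    have hcT : Real.cos T = 1 := by nlinarith [sq_nonneg A, sq_nonneg B]
    have hsT : Real.sin T = 0 := by nlinarith [sq_nonneg A, sq_nonneg B]
    -- T = k * 2π for a positive integer k
    obtain ⟨k, hk⟩ := (Real.cos_eq_one_iff T).mp hcT
    have hpi : (0:ℝ) < Real.pi := Real.pi_pos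
    have hk0 : (0:ℝ) < (k:ℝ) := by
      by_contra hk0
      push_neg at hk0
      have : (k:ℝ) * (2 * Real.pi) ≤ 0 :=
        mul_nonpos_of_nonpos_of_nonneg hk0 (by positivity)
      linarith [hk ▸ this]
    -- cos (a*T) ≠ 1 by irrationality
    have hc1 : Real.cos (a * T) ≠ 1 := by
      intro hc
      obtain ⟨m, hm⟩ := (Real.cos_eq_one_iff (a * T)).mp hc
      apply hairr
      refine ⟨(m : ℚ) / (k : ℚ), ?_⟩
      have hk0' : (k:ℝ) ≠ 0 := ne_of_gt hk0
      push_cast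
      rw [div_eq_iff hk0']
      have h2pi : (2 * Real.pi) ≠ 0 := by positivity
      refine mul_right_cancel₀ h2pi ?_
      have : (m:ℝ) * (2 * Real.pi) = a * ((k:ℝ) * (2 * Real.pi)) := by rw [hk, hm]
      linarith [this]
    -- ρ is T-periodic
    have hct : ∀ t, Real.cos (t + T) = Real.cos t := by
      intro t; rw [Real.cos_add, hcT, hsT]; ring
    have hst : ∀ t, Real.sin (t + T) = Real.sin t := by
      intro t; rw [Real.sin_add, hcT, hsT]; ring
    have hρT : ∀ t, ρ (t + T) = ρ t := by
      intro t; rw [hρ, hρ, hct, hst]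
    -- first two components vanish identically
    have hxy : ∀ t, ρ t 0 * Real.cos (a * t) + ρ t 1 * Real.sin (a * t) = 0 ∧
        -(ρ t 0) * Real.sin (a * t) + ρ t 1 * Real.cos (a * t) = 0 := by
      intro t
      have h0 := congrFun (hper t) 0
      have h1 := congrFun (hper t) 1
      rw [hP, hP, hρT] at h0 h1
      simp only [Matrix.cons_val_zero, Matrix.cons_val_one, Matrix.head_cons] at h0 h1
      have hco : Real.cos (a * (t + T)) = Real.cos (a*t) * Real.cos (a*T) - Real.sin (a*t) * Real.sin (a*T) := by
        rw [show a * (t + T) = a*t + a*T by ring, Real.cos_add]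
      have hsi : Real.sin (a * (t + T)) = Real.sin (a*t) * Real.cos (a*T) + Real.cos (a*t) * Real.sin (a*T) := by
        rw [show a * (t + T) = a*t + a*T by ring, Real.sin_add]
      rw [hco, hsi] at h0 h1
      have hsum : ((Real.cos (a*T) - 1)^2 + Real.sin (a*T)^2) * (ρ t 0 * Real.cos (a * t) + ρ t 1 * Real.sin (a * t))
          = 0 := by linear_combination (Real.cos (a*T) - 1) * h0 - Real.sin (a*T) * h1
      have hsum' : ((Real.cos (a*T) - 1)^2 + Real.sin (a*T)^2) * (-(ρ t 0) * Real.sin (a * t) + ρ t 1 * Real.cos (a * t))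
          = 0 := by linear_combination Real.sin (a*T) * h0 + (Real.cos (a*T) - 1) * h1
      have hcne : (Real.cos (a*T) - 1)^2 + Real.sin (a*T)^2 ≠ 0 := by
        intro h
        exact hc1 (by nlinarith [sq_nonneg (Real.cos (a*T) - 1), sq_nonneg (Real.sin (a*T))])
      exact ⟨(mul_eq_zero.mp hsum).resolve_left hcne,
        (mul_eq_zero.mp hsum').resolve_left hcne⟩
    -- evaluate at t = 0 and t = π/2
    have h00 := hxy 0
    have hρ0 : ρ 0 = q := by rw [hρ]; funext i; simp
    rw [hρ0] at h00
    simp at h00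
    have hq0 : q 0 = 0 := by tauto
    have hq1 : q 1 = 0 := by tauto
    have hpp := hxy (Real.pi / 2)
    have hρp : ρ (Real.pi/2) = u := by rw [hρ]; funext i; simp
    rw [hρp] at hpp
    obtain ⟨g0, g1⟩ := hpp
    have hcs : Real.cos (a * (Real.pi/2)) ^ 2 + Real.sin (a * (Real.pi/2)) ^ 2 = 1 := by
      rw [← Real.sin_sq_add_cos_sq (a * (Real.pi/2))]; ring
    have hu0 : u 0 = 0 := by nlinarith [g0, g1, hcs]
    have hu1 : u 1 = 0 := by nlinarith [g0, g1, hcs]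
    rw [hq0, hq1] at hq hqu
    rw [hu0, hu1] at hu hqu
    nlinarith [hq, hu, hqu]
  · rintro ⟨hq2, hu2⟩
    rw [hq2] at hq hqu
    rw [hu2] at hu hqu
    simp only [ne_eq, OfNat.ofNat_ne_zero, not_false_eq_true, zero_pow, add_zero,
      mul_zero] at hq hu hqu
    have hs2 : (q 0 * u 1 - q 1 * u 0) ^ 2 = 1 := by
      linear_combination (u 0 ^ 2 + u 1 ^ 2) * hq + hu - (q 0 * u 0 + q 1 * u 1) * hqu
    have hss : q 0 * u 1 - q 1 * u 0 = 1 ∨ q 0 * u 1 - q 1 * u 0 = -1 := by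
      rcases mul_eq_zero.mp (show ((q 0 * u 1 - q 1 * u 0) - 1) * ((q 0 * u 1 - q 1 * u 0) + 1)
          = 0 by linear_combination hs2) with h | h
      · left; linarith
      · right; linarith
    have hu0 : u 0 = -(q 0 * u 1 - q 1 * u 0) * q 1 := by
      linear_combination (-(u 0)) * hq + q 0 * hqu
    have hu1 : u 1 = (q 0 * u 1 - q 1 * u 0) * q 0 := by
      linear_combination (-(u 1)) * hq + q 1 * hqu
    have hpi := Real.pi_pos
    rcases hss with h | h
    · -- u = (-q1, q0, 0)
      rw [h] at hu0 hu1
      have hu0' : u 0 = -(q 1) := by linarith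
      have hu1' : u 1 = q 0 := by linarith
      have hform : ∀ t, P t = ![q 0 * Real.cos ((1 - a) * t) - q 1 * Real.sin ((1 - a) * t),
          q 0 * Real.sin ((1 - a) * t) + q 1 * Real.cos ((1 - a) * t), 0] := by
        intro t
        have hco : Real.cos ((1 - a) * t)
            = Real.cos t * Real.cos (a * t) + Real.sin t * Real.sin (a * t) := by
          rw [show (1 - a) * t = t - a * t by ring, Real.cos_sub]
        have hsi : Real.sin ((1 - a) * t)
            = Real.sin t * Real.cos (a * t) - Real.cos t * Real.sin (a * t) := by
          rw [show (1 - a) * t = t - a * t by ring, Real.sin_sub]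
        have hρn : ∀ i, ρ t i = Real.cos t * q i + Real.sin t * u i := fun i => by rw [hρ]
        have e0 : (Real.cos t * q 0 + Real.sin t * u 0) * Real.cos (a * t)
            + (Real.cos t * q 1 + Real.sin t * u 1) * Real.sin (a * t)
            = q 0 * Real.cos ((1 - a) * t) - q 1 * Real.sin ((1 - a) * t) := by
          rw [hco, hsi, hu0', hu1']; ring
        have e1 : -(Real.cos t * q 0 + Real.sin t * u 0) * Real.sin (a * t)
            + (Real.cos t * q 1 + Real.sin t * u 1) * Real.cos (a * t)
            = q 0 * Real.sin ((1 - a) * t) + q 1 * Real.cos ((1 - a) * t) := by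
          rw [hco, hsi, hu0', hu1']; ring
        have e2 : Real.cos t * q 2 + Real.sin t * u 2 = 0 := by rw [hq2, hu2]; ring
        rw [hP, hρn 0, hρn 1, hρn 2, e0, e1, e2]
      refine ⟨2 * Real.pi / (1 - a), div_pos (by linarith) (by linarith), fun t => ?_⟩
      have harg : (1 - a) * (t + 2 * Real.pi / (1 - a)) = (1 - a) * t + 2 * Real.pi := by
        rw [mul_add, mul_div_cancel₀ _ (show (1:ℝ) - a ≠ 0 by linarith)]
      rw [hform, hform, harg, Real.cos_add_two_pi, Real.sin_add_two_pi]
    · -- u = (q1, -q0, 0)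
      rw [h] at hu0 hu1
      have hu0' : u 0 = q 1 := by linarith
      have hu1' : u 1 = -(q 0) := by linarith
      have hform : ∀ t, P t = ![q 0 * Real.cos ((1 + a) * t) + q 1 * Real.sin ((1 + a) * t),
          -(q 0) * Real.sin ((1 + a) * t) + q 1 * Real.cos ((1 + a) * t), 0] := by
        intro t
        have hco : Real.cos ((1 + a) * t)
            = Real.cos t * Real.cos (a * t) - Real.sin t * Real.sin (a * t) := by
          rw [show (1 + a) * t = t + a * t by ring, Real.cos_add]
        have hsi : Real.sin ((1 + a) * t)
            = Real.sin t * Real.cos (a * t) + Real.cos t * Real.sin (a * t) := by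
          rw [show (1 + a) * t = t + a * t by ring, Real.sin_add]
        have hρn : ∀ i, ρ t i = Real.cos t * q i + Real.sin t * u i := fun i => by rw [hρ]
        have e0 : (Real.cos t * q 0 + Real.sin t * u 0) * Real.cos (a * t)
            + (Real.cos t * q 1 + Real.sin t * u 1) * Real.sin (a * t)
            = q 0 * Real.cos ((1 + a) * t) + q 1 * Real.sin ((1 + a) * t) := by
          rw [hco, hsi, hu0', hu1']; ring
        have e1 : -(Real.cos t * q 0 + Real.sin t * u 0) * Real.sin (a * t)
            + (Real.cos t * q 1 + Real.sin t * u 1) * Real.cos (a * t)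
            = -(q 0) * Real.sin ((1 + a) * t) + q 1 * Real.cos ((1 + a) * t) := by
          rw [hco, hsi, hu0', hu1']; ring
        have e2 : Real.cos t * q 2 + Real.sin t * u 2 = 0 := by rw [hq2, hu2]; ring
        rw [hP, hρn 0, hρn 1, hρn 2, e0, e1, e2]
      refine ⟨2 * Real.pi / (1 + a), div_pos (by linarith) (by linarith), fun t => ?_⟩
      have harg : (1 + a) * (t + 2 * Real.pi / (1 + a)) = (1 + a) * t + 2 * Real.pi := by
        rw [mul_add, mul_div_cancel₀ _ (show (1:ℝ) + a ≠ 0 by linarith)]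
      rw [hform, hform, harg, Real.cos_add_two_pi, Real.sin_add_two_pi]
end

section
/- Let ρ(t) = (sin t, 0, …, 0, cos t) in ℝ^{2m+1} parameterize a great circle through the north pole of S^{2m}, and let φ(t,p) = p·Rot(a₁t, …, a_mt) be the block-rotation flow with 0 < a₁ < 1. Then 𝒫(t) = φ(t, ρ(t)) satisfies 𝒫(2πℓ) = (0,…,0,1) for all ℓ ∈ ℤ, with velocity 𝒫'(2πℓ) = (cos 2πℓa₁, sin 2πℓa₁, 0, …, 0). In particular 𝒫'(2πℓ) = 𝒫'(0) if and only if ℓa₁ ∈ ℤ; since 0 < a₁ < 1, 𝒫'(2π) ≠ 𝒫'(0), so 𝒫 self-intersects at the north pole without closing at t = 2π. -/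
/-!
At `t = 2πℓ` we have `sin t = 0` and `cos t = 1`, so by the product rule the derivative of
`sin · g` there is just `g(2πℓ)`. Hence `𝒫'(2πℓ) = (cos 2πℓa₁, sin 2πℓa₁, 0, …, 0)`, which equals
`𝒫'(0) = e₀` exactly when `cos 2πℓa₁ = 1`, i.e. when `ℓa₁ ∈ ℤ`; for `ℓ = 1` this would force the
integer `a₁` into `(0, 1)`.
-/

open Real

namespace Katok

/-- `𝒫(t) = φ(t, ρ(t))`, the great circle `ρ` through the north pole carried along by the
block rotation flow `φ`, written out in coordinates. -/
noncomputable def curve (m : ℕ) (a t : ℝ) (i : Fin (2 * m + 1)) : ℝ :=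
  if (i : ℕ) = 0 then sin t * cos (a * t)
  else if (i : ℕ) = 1 then sin t * sin (a * t)
  else if (i : ℕ) = 2 * m then cos t else 0

theorem sin_two_pi_mul_int (ℓ : ℤ) : sin (2 * π * ℓ) = 0 := by
  simpa [mul_comm] using sin_add_int_mul_two_pi 0 ℓ

theorem cos_two_pi_mul_int (ℓ : ℤ) : cos (2 * π * ℓ) = 1 := by
  simpa [mul_comm] using cos_int_mul_two_pi ℓ

theorem cos_two_pi_mul_eq_one_iff (x : ℝ) : cos (2 * π * x) = 1 ↔ ∃ k : ℤ, x = k := by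
  rw [cos_eq_one_iff]
  refine exists_congr fun k => ?_
  rw [mul_comm (2 * π) x, mul_left_inj' two_pi_pos.ne', eq_comm]

theorem deriv_ite_const {c : Prop} [Decidable c] (f g : ℝ → ℝ) (x : ℝ) :
    deriv (fun t => if c then f t else g t) x = if c then deriv f x else deriv g x := by
  by_cases h : c <;> simp [h]

theorem deriv_sin_mul_two_pi_mul_int {g : ℝ → ℝ} (ℓ : ℤ)
    (hg : DifferentiableAt ℝ g (2 * π * ℓ)) :
    deriv (fun t => sin t * g t) (2 * π * ℓ) = g (2 * π * ℓ) := by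
  refine ((hasDerivAt_sin _).mul hg.hasDerivAt).deriv.trans ?_
  rw [sin_two_pi_mul_int, cos_two_pi_mul_int]
  ring

theorem curve_two_pi_mul_int {m : ℕ} (hm : 1 ≤ m) (a : ℝ) (ℓ : ℤ) (i : Fin (2 * m + 1)) :
    curve m a (2 * π * ℓ) i = if (i : ℕ) = 2 * m then 1 else 0 := by
  simp only [curve, sin_two_pi_mul_int, cos_two_pi_mul_int, zero_mul]
  split_ifs <;> first | rfl | omega

theorem deriv_curve_two_pi_mul_int {m : ℕ} (a : ℝ) (ℓ : ℤ) (i : Fin (2 * m + 1)) :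
    deriv (fun t => curve m a t i) (2 * π * ℓ) =
      if (i : ℕ) = 0 then cos (2 * π * ℓ * a)
      else if (i : ℕ) = 1 then sin (2 * π * ℓ * a) else 0 := by
  have hcos := deriv_sin_mul_two_pi_mul_int (g := fun t => cos (a * t)) ℓ (by fun_prop)
  have hsin := deriv_sin_mul_two_pi_mul_int (g := fun t => sin (a * t)) ℓ (by fun_prop)
  simp only [curve, deriv_ite_const, hcos, hsin, Real.deriv_cos', deriv_const,
    sin_two_pi_mul_int, neg_zero, mul_comm a (2 * π * ℓ)]
  split_ifs <;> rfl

theorem deriv_curve_zero {m : ℕ} (a : ℝ) (i : Fin (2 * m + 1)) :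
    deriv (fun t => curve m a t i) 0 = if (i : ℕ) = 0 then 1 else 0 := by
  simpa using deriv_curve_two_pi_mul_int a 0 i

theorem cos_sin_vector_eq_single_zero_iff {n : ℕ} (θ : ℝ) :
    (∀ i : Fin (n + 1), (if (i : ℕ) = 0 then cos θ else if (i : ℕ) = 1 then sin θ else 0) =
      if (i : ℕ) = 0 then 1 else 0) ↔ cos θ = 1 := by
  refine ⟨fun h => by simpa using h 0, fun h i => ?_⟩
  have hsin : sin θ = 0 := sin_eq_zero_iff_cos_eq.2 (Or.inl h)
  split_ifs <;> simp [h, hsin]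

end Katok

open Katok in
/-- The Katok geodesic `P(t) = (sin t cos a₁t, sin t sin a₁t, 0, …, 0, cos t)`
through the north pole of `S^{2m}`: it returns to the pole at `t = 2πℓ` with
velocity `(cos 2πℓa₁, sin 2πℓa₁, 0, …, 0)`; it self-intersects without closing
at `t = 2π` since `0 < a₁ < 1`. -/
theorem stmt10 (m : ℕ) (hm : 1 ≤ m) (a₁ : ℝ) (ha0 : 0 < a₁) (ha1 : a₁ < 1)
    (P : ℝ → Fin (2 * m + 1) → ℝ)
    (hP : ∀ t i, P t i =
      if (i : ℕ) = 0 then Real.sin t * Real.cos (a₁ * t)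
      else if (i : ℕ) = 1 then Real.sin t * Real.sin (a₁ * t)
      else if (i : ℕ) = 2 * m then Real.cos t else 0) :
    (∀ ℓ : ℤ, ∀ i, P (2 * Real.pi * ℓ) i = if (i : ℕ) = 2 * m then 1 else 0) ∧
    (∀ ℓ : ℤ, ∀ i, deriv (fun t => P t i) (2 * Real.pi * ℓ) =
      if (i : ℕ) = 0 then Real.cos (2 * Real.pi * ℓ * a₁)
      else if (i : ℕ) = 1 then Real.sin (2 * Real.pi * ℓ * a₁) else 0) ∧
    (∀ ℓ : ℤ,
      (∀ i, deriv (fun t => P t i) (2 * Real.pi * ℓ) = deriv (fun t => P t i) 0)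
        ↔ ∃ k : ℤ, (ℓ : ℝ) * a₁ = k) ∧
    (∃ i, deriv (fun t => P t i) (2 * Real.pi) ≠ deriv (fun t => P t i) 0) := by
  obtain rfl : P = curve m a₁ := funext₂ hP
  have returns_iff (ℓ : ℤ) :
      (∀ i, deriv (fun t => curve m a₁ t i) (2 * π * ℓ) = deriv (fun t => curve m a₁ t i) 0)
        ↔ ∃ k : ℤ, (ℓ : ℝ) * a₁ = k := by
    simp only [deriv_curve_two_pi_mul_int, deriv_curve_zero]
    rw [cos_sin_vector_eq_single_zero_iff, mul_assoc, cos_two_pi_mul_eq_one_iff]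
  refine ⟨curve_two_pi_mul_int hm a₁, deriv_curve_two_pi_mul_int a₁, returns_iff, ?_⟩
  by_contra! h
  obtain ⟨k, hk⟩ := (returns_iff 1).1 (by simpa using h)
  rw [Int.cast_one, one_mul] at hk
  have : (0 : ℤ) < k := by exact_mod_cast hk ▸ ha0
  have : k < 1 := by exact_mod_cast hk ▸ ha1
  omega
end
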